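/- arXiv:math/9906006 — 3 statements merged into one kernel-verified Lean document; each statement's English description precedes it below -/
import Mathlib

section
/- Let a, b ∈ ℂ[X] and C ∈ ℂ with C ≠ 0. Suppose every exponent occurring with nonzero coefficient in a and in b is divisible by 5, that a(0) = 0, that deg a ≤ 8, and that 4a³ + 27b² = C·X^{10}·(4X⁵ + 27) in ℂ[X]. Then a = A·X⁵ and b = B·X⁵ for complex numbers A, B satisfying A³ = C and B² = C. -/
open Polynomial

/-- Let `a b : ℂ[X]` and `c : ℂ` with `c ≠ 0`.  Suppose every exponent occurring
with nonzero coefficient in `a` and in `b` is divisible by `5`, that `a 0 = 0`,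
that `deg a ≤ 8`, and that `4a³ + 27b² = c X^10 (4X⁵ + 27)` in `ℂ[X]`.  Then
`a = A X⁵` and `b = B X⁵` for complex numbers `A, B` with `A³ = c` and
`B² = c`. -/
theorem stmt_9 (a b : ℂ[X]) (c : ℂ) (hc : c ≠ 0)
    (ha5 : ∀ k ∈ a.support, 5 ∣ k) (hb5 : ∀ k ∈ b.support, 5 ∣ k)
    (ha0 : a.eval 0 = 0) (hdeg : a.natDegree ≤ 8)
    (h : 4 * a ^ 3 + 27 * b ^ 2 = C c * X ^ 10 * (4 * X ^ 5 + 27)) :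
    ∃ A B : ℂ, a = C A * X ^ 5 ∧ b = C B * X ^ 5 ∧ A ^ 3 = c ∧ B ^ 2 = c := by
  have ha0' : a.coeff 0 = 0 := by rwa [coeff_zero_eq_eval_zero]
  set A := a.coeff 5 with hA
  have haeq : a = C A * X ^ 5 := by
    ext n
    rcases eq_or_ne n 5 with rfl | hn
    · simp [hA]
    · simp only [coeff_C_mul, coeff_X_pow, if_neg hn, mul_zero]
      by_contra h0
      have hmem : n ∈ a.support := mem_support_iff.mpr h0
      have h1 := ha5 n hmem
      have h2 := le_natDegree_of_ne_zero h0
      have h3 : n ≠ 0 := by rintro rfl; exact h0 ha0'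
      omega
  have h27 : (27:ℂ[X]) = C 27 := (map_ofNat C 27).symm
  have h' : C 27 * b ^ 2 = C (4*c - 4*A^3) * X ^ 15 + C (27*c) * X ^ 10 := by
    rw [haeq] at h
    rw [← h27]
    simp only [map_sub, map_mul, map_pow, map_ofNat]
    linear_combination h
  have hbne : b ≠ 0 := by
    rintro rfl
    have := congrArg (fun p => coeff p 10) h'
    simp [coeff_X_pow, coeff_C_mul, coeff_mul_X_pow'] at this
    exact hc this
  have hd5 : b.natDegree = 5 := by
    have hlc : (b ^ 2).coeff (b.natDegree + b.natDegree) = b.leadingCoeff * b.leadingCoeff := by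
      rw [sq]; exact coeff_mul_degree_add_degree b b
    have hne : (C 27 * b ^ 2).coeff (b.natDegree + b.natDegree) ≠ 0 := by
      rw [coeff_C_mul, hlc]
      exact mul_ne_zero (by norm_num)
        (mul_ne_zero (leadingCoeff_ne_zero.mpr hbne) (leadingCoeff_ne_zero.mpr hbne))
    rw [h'] at hne
    simp only [coeff_add, coeff_C_mul, coeff_X_pow] at hne
    have hdvd : 5 ∣ b.natDegree := hb5 _ (natDegree_mem_support_of_nonzero hbne)
    by_contra hne5
    rw [if_neg (by omega), if_neg (by omega)] at hne
    simp at hne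
  have hb0 : b.coeff 0 = 0 := by
    have := congrArg (fun p => coeff p 0) h'
    simp only [coeff_C_mul, coeff_add, coeff_X_pow] at this
    rw [sq, mul_coeff_zero] at this
    norm_num at this
    exact this
  set B := b.coeff 5 with hB
  have hbeq : b = C B * X ^ 5 := by
    ext n
    rcases eq_or_ne n 5 with rfl | hn
    · simp [hB]
    · simp only [coeff_C_mul, coeff_X_pow, if_neg hn, mul_zero]
      by_contra h0
      have h1 := hb5 n (mem_support_iff.mpr h0)
      have h2 := le_natDegree_of_ne_zero h0
      have h3 : n ≠ 0 := by rintro rfl; exact h0 hb0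
      omega
  rw [hbeq] at h'
  have e15 := congrArg (fun p => coeff p 15) h'
  have e10 := congrArg (fun p => coeff p 10) h'
  simp only [mul_pow, ← C_pow, ← pow_mul, ← mul_assoc, ← C_mul, coeff_C_mul, coeff_add,
    coeff_X_pow] at e15 e10
  norm_num at e15 e10
  refine ⟨A, B, haeq, hbeq, ?_, ?_⟩
  · linear_combination e15 / 4
  · exact e10
end

section
/- Let ζ ∈ ℂ be a primitive 19-th root of unity and define σ : ℂ³ → ℂ³ by σ(x, y, t) = (ζ⁷x, ζy, ζ²t). Then σ maps the set S = {(x, y, t) ∈ ℂ³ : y² = x³ + t⁷x + t} bijectively onto itself, and σ has order exactly 19 as a bijection of ℂ³. -/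
/-- Let `ζ` be a primitive 19-th root of unity and `σ : ℂ³ → ℂ³` the bijection
`σ(x, y, t) = (ζ⁷x, ζy, ζ²t)`.  Then `σ` maps the affine surface
`S = {y² = x³ + t⁷x + t}` bijectively onto itself, and `σ` has order exactly 19
as a bijection of `ℂ³`. -/
theorem stmt_13 (ζ : ℂ) (hζ : IsPrimitiveRoot ζ 19)
    (σ : Equiv.Perm (ℂ × ℂ × ℂ))
    (hσ : ∀ P : ℂ × ℂ × ℂ, σ P = (ζ ^ 7 * P.1, ζ * P.2.1, ζ ^ 2 * P.2.2)) :
    Set.BijOn σ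
      {P : ℂ × ℂ × ℂ | P.2.1 ^ 2 = P.1 ^ 3 + P.2.2 ^ 7 * P.1 + P.2.2}
      {P : ℂ × ℂ × ℂ | P.2.1 ^ 2 = P.1 ^ 3 + P.2.2 ^ 7 * P.1 + P.2.2} ∧
    orderOf σ = 19 := by
  set S : Set (ℂ × ℂ × ℂ) :=
    {P : ℂ × ℂ × ℂ | P.2.1 ^ 2 = P.1 ^ 3 + P.2.2 ^ 7 * P.1 + P.2.2} with hS
  have h19 : ζ ^ 19 = 1 := hζ.pow_eq_one
  have hmaps : Set.MapsTo σ S S := by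
    intro P hP
    simp only [hS, Set.mem_setOf_eq] at hP ⊢
    rw [hσ]
    simp only
    linear_combination ζ ^ 2 * hP - ζ ^ 2 * (P.1 ^ 3 + P.2.2 ^ 7 * P.1) * h19
  have hpow : ∀ n : ℕ, Set.MapsTo (⇑(σ ^ n)) S S := by
    intro n
    induction n with
    | zero => simpa using Set.mapsTo_id S
    | succ n ih =>
        intro P hP
        rw [pow_succ, Equiv.Perm.mul_apply]
        exact ih (hmaps hP)
  have key : ∀ (n : ℕ) (P : ℂ × ℂ × ℂ),
      (σ ^ n) P = (ζ ^ (7 * n) * P.1, ζ ^ n * P.2.1, ζ ^ (2 * n) * P.2.2) := by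
    intro n
    induction n with
    | zero => intro P; simp
    | succ n ih =>
        intro P
        rw [pow_succ, Equiv.Perm.mul_apply, hσ, ih]
        simp only [Prod.mk.injEq]
        refine ⟨?_, ?_, ?_⟩ <;> · simp only [mul_add, mul_one, pow_add, pow_succ]; ring
  have hσ19 : σ ^ 19 = 1 := by
    ext P
    · rw [key 19]
      simp only [Equiv.Perm.coe_one, id_eq]
      norm_num
      rw [show (133 : ℕ) = 19 * 7 by norm_num, pow_mul, h19, one_pow, one_mul]
    · rw [key 19]
      simp only [Equiv.Perm.coe_one, id_eq]
      rw [h19, one_mul]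
    · rw [key 19]
      simp only [Equiv.Perm.coe_one, id_eq]
      rw [show (2 * 19 : ℕ) = 19 * 2 by norm_num, pow_mul, h19, one_pow, one_mul]
  have hσne : σ ≠ 1 := by
    intro h
    have := hσ (1, 0, 0)
    rw [h] at this
    simp only [Equiv.Perm.coe_one, id_eq, mul_one, mul_zero] at this
    have h7 : ζ ^ 7 = 1 := by
      have := congrArg Prod.fst this
      simpa using this.symm
    exact (hζ.pow_ne_one_of_pos_of_lt (by norm_num) (by norm_num)) h7
  haveI : Fact (Nat.Prime 19) := ⟨by norm_num⟩
  refine ⟨⟨hmaps, σ.injective.injOn, ?_⟩, orderOf_eq_prime hσ19 hσne⟩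
  intro P hP
  refine ⟨(σ ^ 18) P, hpow 18 hP, ?_⟩
  have : σ ((σ ^ 18) P) = (σ ^ 19) P := by
    rw [← Equiv.Perm.mul_apply, ← pow_succ']
  rw [this, hσ19]
  rfl
end

section
/- Let ζ ∈ ℂ be a primitive 13-th root of unity and define σ : ℂ³ → ℂ³ by σ(x, y, t) = (ζ⁵x, ζy, ζ²t). Then σ maps the set S = {(x, y, t) ∈ ℂ³ : y² = x³ + t⁵x + t} bijectively onto itself, and σ has order exactly 13 as a bijection of ℂ³. -/
/-- Let `ζ` be a primitive 13-th root of unity and `σ : ℂ³ → ℂ³` the bijection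
`σ(x, y, t) = (ζ⁵x, ζy, ζ²t)`.  Then `σ` maps the affine surface
`S = {y² = x³ + t⁵x + t}` bijectively onto itself, and `σ` has order exactly 13
as a bijection of `ℂ³`. -/
theorem stmt_15 (ζ : ℂ) (hζ : IsPrimitiveRoot ζ 13)
    (σ : Equiv.Perm (ℂ × ℂ × ℂ))
    (hσ : ∀ P : ℂ × ℂ × ℂ, σ P = (ζ ^ 5 * P.1, ζ * P.2.1, ζ ^ 2 * P.2.2)) :
    Set.BijOn σ
      {P : ℂ × ℂ × ℂ | P.2.1 ^ 2 = P.1 ^ 3 + P.2.2 ^ 5 * P.1 + P.2.2}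
      {P : ℂ × ℂ × ℂ | P.2.1 ^ 2 = P.1 ^ 3 + P.2.2 ^ 5 * P.1 + P.2.2} ∧
    orderOf σ = 13 := by
  have h13 : ζ ^ 13 = 1 := hζ.pow_eq_one
  constructor
  · refine ⟨?_, σ.injective.injOn, ?_⟩
    · intro P hP
      simp only [Set.mem_setOf_eq] at hP ⊢
      rw [hσ]
      simp only
      have : (ζ * P.2.1) ^ 2 = ζ ^ 2 * P.2.1 ^ 2 := by ring
      rw [this, hP]
      have h15 : ζ ^ 15 = ζ ^ 2 := by
        have : ζ ^ 15 = ζ ^ 13 * ζ ^ 2 := by ring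
        rw [this, h13, one_mul]
      ring_nf
      rw [h15]
      ring
    · intro P hP
      simp only [Set.mem_setOf_eq] at hP
      refine ⟨(ζ ^ 8 * P.1, ζ ^ 12 * P.2.1, ζ ^ 11 * P.2.2), ?_, ?_⟩
      · simp only [Set.mem_setOf_eq]
        have h24 : ζ ^ 24 = ζ ^ 11 := by
          have : ζ ^ 24 = ζ ^ 13 * ζ ^ 11 := by ring
          rw [this, h13, one_mul]
        have h63 : ζ ^ 63 = ζ ^ 11 := by
          have : ζ ^ 63 = (ζ ^ 13) ^ 4 * ζ ^ 11 := by ring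
          rw [this, h13, one_pow, one_mul]
        calc (ζ ^ 12 * P.2.1) ^ 2 = ζ ^ 24 * P.2.1 ^ 2 := by ring
          _ = ζ ^ 11 * (P.1 ^ 3 + P.2.2 ^ 5 * P.1 + P.2.2) := by rw [h24, hP]
          _ = (ζ ^ 8 * P.1) ^ 3 + (ζ ^ 11 * P.2.2) ^ 5 * (ζ ^ 8 * P.1) + ζ ^ 11 * P.2.2 := by
            have e1 : (ζ ^ 8 * P.1) ^ 3 = ζ ^ 24 * P.1 ^ 3 := by ring
            have e2 : (ζ ^ 11 * P.2.2) ^ 5 * (ζ ^ 8 * P.1) = ζ ^ 63 * (P.2.2 ^ 5 * P.1) := by ring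
            rw [e1, e2, h24, h63]; ring
      · rw [hσ]
        simp only
        have h14 : ζ ^ 13 * ζ = ζ := by rw [h13, one_mul]
        ext <;> simp only [Prod.fst, Prod.snd]
        · show ζ ^ 5 * (ζ ^ 8 * P.1) = P.1
          have : ζ ^ 5 * (ζ ^ 8 * P.1) = ζ ^ 13 * P.1 := by ring
          rw [this, h13, one_mul]
        · show ζ * (ζ ^ 12 * P.2.1) = P.2.1
          have : ζ * (ζ ^ 12 * P.2.1) = ζ ^ 13 * P.2.1 := by ring
          rw [this, h13, one_mul]
        · show ζ ^ 2 * (ζ ^ 11 * P.2.2) = P.2.2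
          have : ζ ^ 2 * (ζ ^ 11 * P.2.2) = ζ ^ 13 * P.2.2 := by ring
          rw [this, h13, one_mul]
  · have hpow : ∀ (n : ℕ) (P : ℂ × ℂ × ℂ),
        (σ ^ n) P = (ζ ^ (5 * n) * P.1, ζ ^ n * P.2.1, ζ ^ (2 * n) * P.2.2) := by
      intro n
      induction n with
      | zero => intro P; simp
      | succ n ih =>
        intro P
        rw [pow_succ, Equiv.Perm.mul_apply, hσ, ih]
        simp only
        refine Prod.ext ?_ (Prod.ext ?_ ?_)
        · show ζ ^ (5 * n) * (ζ ^ 5 * P.1) = ζ ^ (5 * (n + 1)) * P.1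
          rw [show 5 * (n + 1) = 5 * n + 5 from by ring, pow_add]; ring
        · show ζ ^ n * (ζ * P.2.1) = ζ ^ (n + 1) * P.2.1
          rw [pow_succ]; ring
        · show ζ ^ (2 * n) * (ζ ^ 2 * P.2.2) = ζ ^ (2 * (n + 1)) * P.2.2
          rw [show 2 * (n + 1) = 2 * n + 2 from by ring, pow_add]; ring
    have h13' : σ ^ 13 = 1 := Equiv.ext fun P => by
      rw [hpow 13 P]
      have h65 : ζ ^ (5 * 13) = 1 := by
        have : ζ ^ (5 * 13) = (ζ ^ 13) ^ 5 := by ring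
        rw [this, h13, one_pow]
      have h26 : ζ ^ (2 * 13) = 1 := by
        have : ζ ^ (2 * 13) = (ζ ^ 13) ^ 2 := by ring
        rw [this, h13, one_pow]
      rw [h65, h13, h26]
      simp
    have hne : σ ≠ 1 := by
      intro h
      have := hσ (0, 1, 0)
      rw [h] at this
      simp only [Equiv.Perm.coe_one, id_eq, mul_zero, mul_one] at this
      have hζ1 : ζ = 1 := (Prod.ext_iff.mp (Prod.ext_iff.mp this).2).1.symm
      have := hζ.pow_ne_one_of_pos_of_lt (l := 1) (by norm_num) (by norm_num)
      rw [pow_one, hζ1] at this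
      exact this rfl
    have hd : orderOf σ ∣ 13 := orderOf_dvd_of_pow_eq_one h13'
    rcases (Nat.Prime.eq_one_or_self_of_dvd (by norm_num) _ hd) with h | h
    · exact absurd (orderOf_eq_one_iff.mp h) hne
    · exact h
end
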